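/- Let G' be a connected subgraph of the associated graph G satisfying condition (a₁), with κ(g) ≤ 2 for all vertices g of G' and containing no primitive cycles. Then every two vertices of G' are joined by a unique primitive path in G'. -/

import Mathlib

open Filter

namespace Birkhoff

variable {Ω ι : Type*}

/-- Adjacency in the associated graph `G`: two distinct vertices are adjacent
iff they lie in a common set `Ω_k`. -/
def Adj (Γ : ι → Set Ω) (g g' : Ω) : Prop :=
  g ≠ g' ∧ ∃ k, g ∈ Γ k ∧ g' ∈ Γ k

/-- `Γ(g)`, the set of indices `k` with `g ∈ Ω_k`. -/
def idx (Γ : ι → Set Ω) (g : Ω) : Set ι :=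
  {k | g ∈ Γ k}

/-- Condition (a): every point lies in only finitely many of the sets. -/
def CondA (Γ : ι → Set Ω) : Prop :=
  ∀ g : Ω, (idx Γ g).Finite

/-- Condition (1.2): `Ω_k \ Ω_j ≠ ∅` for all `j ≠ k`. -/
def Cond12 (Γ : ι → Set Ω) : Prop :=
  ∀ j k : ι, j ≠ k → (Γ k \ Γ j).Nonempty

/-- The set `S(Γ)` of nonnegative functions whose sum over each `Ω_k` is `1`. -/
def SGamma (Γ : ι → Set Ω) : Set (Ω → ℝ) :=
  {w | (∀ g : Ω, 0 ≤ w g) ∧ ∀ k : ι, HasSum (fun g : Γ k => w g) 1}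

/-- The set `S⁰(Γ)` of nonnegative functions whose sum over each `Ω_k` is `≤ 1`. -/
def S0Gamma (Γ : ι → Set Ω) : Set (Ω → ℝ) :=
  {w | (∀ g : Ω, 0 ≤ w g) ∧ ∀ k : ι, ∃ s : ℝ, s ≤ 1 ∧ HasSum (fun g : Γ k => w g) s}

/-- The set `P(Γ)` of `{0,1}`-valued functions in `S(Γ)`. -/
def PGamma (Γ : ι → Set Ω) : Set (Ω → ℝ) :=
  {w | w ∈ SGamma Γ ∧ ∀ g : Ω, w g = 0 ∨ w g = 1}

/-- The set `P⁰(Γ)` of `{0,1}`-valued functions whose sum over each `Ω_k` is `≤ 1`. -/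
def P0Gamma (Γ : ι → Set Ω) : Set (Ω → ℝ) :=
  {w | (∀ g : Ω, w g = 0 ∨ w g = 1) ∧
    ∀ k : ι, ∃ s : ℝ, s ≤ 1 ∧ HasSum (fun g : Γ k => w g) s}

/-- Condition (w): `W` is solid. -/
def CondW (W : Set (Ω → ℝ)) : Prop :=
  ∀ w ∈ W, ∀ w' : Ω → ℝ, (∀ g : Ω, |w' g| ≤ |w g|) → w' ∈ W

/-- The list of edges of a path, as unordered pairs. -/
def edgeList (l : List Ω) : List (Sym2 Ω) :=
  (l.zip l.tail).map fun p => s(p.1, p.2)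

/-- A path in the associated graph: nonempty list of vertices, consecutive
vertices adjacent, and all edges distinct. -/
def IsPathList (Γ : ι → Set Ω) (l : List Ω) : Prop :=
  l ≠ [] ∧ l.Chain' (Adj Γ) ∧ (edgeList l).Nodup

/-- Each vertex of `l` is adjacent to at most two other vertices of `l`. -/
def SimpleOn (Γ : ι → Set Ω) (l : List Ω) : Prop :=
  ∀ g ∈ l, ({g' : Ω | g' ∈ l ∧ Adj Γ g g'}).ncard ≤ 2

/-- No set `Ω_k` contains more than two vertices of `l`. -/
def PrimitiveOn (Γ : ι → Set Ω) (l : List Ω) : Prop :=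
  ∀ k : ι, ({g : Ω | g ∈ l ∧ g ∈ Γ k}).ncard ≤ 2

def IsSimplePath (Γ : ι → Set Ω) (l : List Ω) : Prop :=
  IsPathList Γ l ∧ SimpleOn Γ l

def IsPrimitivePath (Γ : ι → Set Ω) (l : List Ω) : Prop :=
  IsSimplePath Γ l ∧ PrimitiveOn Γ l

/-- A (simple) cycle `(g₁, …, g_m, g₁)`, encoded as the list of its `m + 1`
consecutive vertices (first vertex repeated at the end). -/
def IsCycle (Γ : ι → Set Ω) (l : List Ω) : Prop :=
  IsPathList Γ l ∧ l.head? = l.getLast? ∧ 2 ≤ l.length ∧ l.dropLast.Nodup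

def IsSimpleCycle (Γ : ι → Set Ω) (l : List Ω) : Prop :=
  IsCycle Γ l ∧ SimpleOn Γ l

def IsPrimitiveCycle (Γ : ι → Set Ω) (l : List Ω) : Prop :=
  IsSimpleCycle Γ l ∧ PrimitiveOn Γ l

/-- The cycle `(g₁, …, g_m, g₁)`, a list with `m + 1` entries, is odd iff `m` is odd. -/
def OddCycleList (l : List Ω) : Prop :=
  Odd (l.length - 1)

/-- `g'` can be reached from `g` by a path all of whose vertices lie in `A`. -/
def ReachIn (Γ : ι → Set Ω) (A : Set Ω) (g g' : Ω) : Prop :=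
  ∃ l : List Ω, l.Chain' (Adj Γ) ∧ (∀ x ∈ l, x ∈ A) ∧
    l.head? = some g ∧ l.getLast? = some g'

/-- The connected component of `g` in the subgraph of `G` induced on `A`. -/
def component (Γ : ι → Set Ω) (A : Set Ω) (g : Ω) : Set Ω :=
  {g' | ReachIn Γ A g g'}

/-- The subgraph induced on `A` is connected. -/
def ConnectedOn (Γ : ι → Set Ω) (A : Set Ω) : Prop :=
  ∀ g ∈ A, ∀ g' ∈ A, ReachIn Γ A g g'

/-- `G_n := ⋃_{k ≤ n} Ω_k`. -/
def Gn (Γ : ℕ → Set Ω) (n : ℕ) : Set Ω :=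
  ⋃ k ∈ {k : ℕ | k ≤ n}, Γ k

/-- The space `W'` of functions pairing summably with every element of `W`. -/
def Wdual (W : Set (Ω → ℝ)) : Set (Ω → ℝ) :=
  {w' | ∀ w ∈ W, Summable fun g : Ω => |w g * w' g|}

/-- `S_n⁰(Γ, W)`: (extensions by zero of) nonnegative functions on `G_n` whose
sums over `Ω_k`, `k ≤ n`, equal `1`, whose sums over `Ω_k ∩ G_n`, `k > n`, are
`≤ 1`, and which belong to `W`. -/
def Sn0 (Γ : ℕ → Set Ω) (W : Set (Ω → ℝ)) (n : ℕ) : Set (Ω → ℝ) :=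
  {w | (∀ g : Ω, 0 ≤ w g) ∧ (∀ g ∉ Gn Γ n, w g = 0) ∧
    (∀ k ≤ n, HasSum (fun g : Γ k => w g) 1) ∧
    (∀ k > n, ∃ s : ℝ, s ≤ 1 ∧ HasSum (fun g : Γ k => w g) s) ∧ w ∈ W}


section Stmt6Aux

variable {Γ : ι → Set Ω} {G' : Set Ω}

lemma Adj.symm2 {g g' : Ω} (h : Adj Γ g g') : Adj Γ g' g :=
  ⟨h.1.symm, h.2.imp fun _ hk => ⟨hk.2, hk.1⟩⟩

lemma mem_pair_of_encard_le_two {s : Set ι} {a b c : ι} (hs : s.encard ≤ 2)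
    (ha : a ∈ s) (hb : b ∈ s) (hab : a ≠ b) (hc : c ∈ s) : c = a ∨ c = b := by
  by_contra hcon
  push_neg at hcon
  have hsub : ({c, a, b} : Set ι) ⊆ s := by
    intro z hz
    simp only [Set.mem_insert_iff, Set.mem_singleton_iff] at hz
    rcases hz with rfl | rfl | rfl <;> assumption
  have h3 : ({c, a, b} : Set ι).encard = 3 := by
    rw [Set.encard_insert_of_notMem (by simp [hcon.1, hcon.2]),
      Set.encard_insert_of_notMem (by simp [hab]), Set.encard_singleton]
    rfl
  have := (Set.encard_mono hsub).trans hs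
  rw [h3] at this
  norm_num at this

lemma prim3 {l : List Ω} {v a b c : Ω} (hk2 : (idx Γ v).encard ≤ 2)
    (hprim : PrimitiveOn Γ l) (hv : v ∈ l) (ha : a ∈ l) (hb : b ∈ l) (hc : c ∈ l)
    (hab : a ≠ b) (hac : a ≠ c) (hbc : b ≠ c)
    (hA : Adj Γ v a) (hB : Adj Γ v b) (hC : Adj Γ v c) : False := by
  obtain ⟨ka, hka, hka'⟩ := hA.2
  obtain ⟨kb, hkb, hkb'⟩ := hB.2
  obtain ⟨kc, hkc, hkc'⟩ := hC.2
  have key : ∀ (k : ι) (x y : Ω), x ∈ l → y ∈ l → x ≠ y → v ≠ x → v ≠ y →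
      x ∈ Γ k → y ∈ Γ k → v ∈ Γ k → False := by
    intro k x y hx hy hxy hxv hyv h1 h2 h3
    have hfin : ({g : Ω | g ∈ l ∧ g ∈ Γ k}).Finite :=
      (List.finite_toSet l).subset fun z hz => hz.1
    have hlt : 2 < ({g : Ω | g ∈ l ∧ g ∈ Γ k}).ncard :=
      (Set.two_lt_ncard hfin).2 ⟨v, ⟨hv, h3⟩, x, ⟨hx, h1⟩, y, ⟨hy, h2⟩, hxv, hyv, hxy⟩
    exact absurd (hprim k) (by omega)
  by_cases h1 : ka = kb
  · exact key ka a b ha hb hab hA.1 hB.1 hka' (h1 ▸ hkb') hka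
  by_cases h2 : ka = kc
  · exact key ka a c ha hc hac hA.1 hC.1 hka' (h2 ▸ hkc') hka
  by_cases h3 : kb = kc
  · exact key kb b c hb hc hbc hB.1 hC.1 hkb' (h3 ▸ hkc') hkb
  rcases mem_pair_of_encard_le_two hk2 hka hkb h1 hkc with rfl | rfl
  · exact h2 rfl
  · exact h3 rfl

lemma simpleOn_of_primitiveOn {l : List Ω} (hk : ∀ x ∈ l, (idx Γ x).encard ≤ 2)
    (hprim : PrimitiveOn Γ l) : SimpleOn Γ l := by
  intro v hv
  by_contra hlt
  push_neg at hlt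
  have hfin : ({g' : Ω | g' ∈ l ∧ Adj Γ v g'}).Finite :=
    (List.finite_toSet l).subset fun z hz => hz.1
  obtain ⟨a, ha, b, hb, c, hc, hab, hac, hbc⟩ := (Set.two_lt_ncard hfin).1 hlt
  exact prim3 (hk v hv) hprim hv ha.1 hb.1 hc.1 hab hac hbc ha.2 hb.2 hc.2

lemma chain'_getElem {α : Type*} {R : α → α → Prop} {l : List α} (h : l.Chain' R)
    (i : ℕ) (hi : i + 1 < l.length) : R (l[i]'(by omega)) (l[i+1]'hi) := by
  have := List.isChain_iff_getElem.1 h i (by omega)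
  simpa using this

lemma chain'_of_getElem {α : Type*} {R : α → α → Prop} {l : List α}
    (h : ∀ (i : ℕ) (hi : i + 1 < l.length), R (l[i]'(by omega)) (l[i+1]'hi)) :
    l.Chain' R := by
  refine List.isChain_iff_getElem.2 fun i hi => ?_
  simpa using h i (by omega)

lemma edgeList_length (l : List Ω) : (edgeList l).length = l.length - 1 := by
  simp [edgeList]

lemma edgeList_getElem {l : List Ω} {i : ℕ} (hi : i + 1 < l.length) :
    (edgeList l)[i]'(by rw [edgeList_length]; omega) =
      s(l[i]'(by omega), l[i+1]'hi) := by
  simp [edgeList]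

lemma mem_of_mem_edgeList {l : List Ω} {e : Sym2 Ω} (he : e ∈ edgeList l) :
    ∀ x ∈ e, x ∈ l := by
  simp only [edgeList, List.mem_map] at he
  obtain ⟨⟨u, w⟩, hmem, rfl⟩ := he
  have h1 := List.of_mem_zip hmem
  intro x hx
  rcases Sym2.mem_iff.1 hx with rfl | rfl
  · exact h1.1
  · exact List.mem_of_mem_tail h1.2

lemma edgeList_nodup_of_nodup {l : List Ω} (h : l.Nodup) : (edgeList l).Nodup := by
  induction l with
  | nil => simp [edgeList]
  | cons a t ih =>
    cases t with
    | nil => simp [edgeList]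
    | cons b t' =>
      have hunfold : edgeList (a :: b :: t') = s(a, b) :: edgeList (b :: t') := by
        simp [edgeList]
      rw [hunfold]
      refine List.nodup_cons.2 ⟨fun hmem => ?_, ih h.of_cons⟩
      have := mem_of_mem_edgeList hmem a (by simp)
      exact (List.nodup_cons.1 h).1 this

end Stmt6Aux

/-- A walk from `g` to `g'` inside `G'`. -/
def WalkSpec (Γ : ι → Set Ω) (G' : Set Ω) (g g' : Ω) (l : List Ω) : Prop :=
  l.Chain' (Adj Γ) ∧ (∀ x ∈ l, x ∈ G') ∧ l.head? = some g ∧ l.getLast? = some g'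

section Stmt6Aux2

variable {Γ : ι → Set Ω} {G' : Set Ω} {g g' : Ω}

lemma WalkSpec.ne_nil {l : List Ω} (hw : WalkSpec Γ G' g g' l) : l ≠ [] := by
  intro h; rw [h] at hw; exact absurd hw.2.2.1 (by simp)

lemma WalkSpec.getElem_zero {l : List Ω} (hw : WalkSpec Γ G' g g' l)
    (h0 : 0 < l.length) : l[0] = g := by
  have := hw.2.2.1
  rw [List.head?_eq_getElem?, List.getElem?_eq_getElem h0] at this
  exact Option.some.inj this

lemma WalkSpec.getElem_last {l : List Ω} (hw : WalkSpec Γ G' g g' l)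
    (h0 : l.length - 1 < l.length) : l[l.length - 1] = g' := by
  have := hw.2.2.2
  rw [List.getLast?_eq_getElem?, List.getElem?_eq_getElem h0] at this
  exact Option.some.inj this

lemma walkSpec_splice {l : List Ω} (hw : WalkSpec Γ G' g g' l)
    {i j : ℕ} (hij : i < j) (hj : j < l.length)
    (hadj : Adj Γ (l[i]'(by omega)) (l[j]'hj)) :
    WalkSpec Γ G' g g' (l.take (i+1) ++ l.drop j) ∧
      (l.take (i+1) ++ l.drop j).length = i + 1 + (l.length - j) := by
  obtain ⟨hch, hmem, hhd, hlast⟩ := hw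
  have hi : i < l.length := by omega
  have hlen : (l.take (i+1) ++ l.drop j).length = i + 1 + (l.length - j) := by
    simp [List.length_take, List.length_drop]; omega
  have hget : ∀ (m : ℕ) (hm : m < i + 1 + (l.length - j)),
      (l.take (i+1) ++ l.drop j)[m]'(by omega) =
        if m ≤ i then l[m]'(by omega) else l[j + (m - (i+1))]'(by omega) := by
    intro m hm
    by_cases hcase : m ≤ i
    · rw [List.getElem_append_left (by simp [List.length_take]; omega)]
      simp [hcase]
    · rw [List.getElem_append_right (by simp [List.length_take]; omega)]
      simp only [List.getElem_drop]
      rw [if_neg hcase]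
      congr 1
      simp [List.length_take]
      omega
  refine ⟨⟨?_, ?_, ?_, ?_⟩, hlen⟩
  · refine chain'_of_getElem fun m hm => ?_
    rw [hlen] at hm
    have e1 := hget m (by omega)
    have e2 := hget (m+1) (by omega)
    rw [e1, e2]
    by_cases h1 : m + 1 ≤ i
    · rw [if_pos (by omega), if_pos h1]
      exact chain'_getElem hch m (by omega)
    · by_cases h2 : m ≤ i
      · -- m = i, junction
        have hmi : m = i := by omega
        rw [if_pos h2, if_neg h1]
        subst hmi
        have : j + (m + 1 - (m+1)) = j := by omega
        simp only [this]
        exact hadj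
      · rw [if_neg h2, if_neg h1]
        have harith : j + (m + 1 - (i+1)) = (j + (m - (i+1))) + 1 := by omega
        simp only [harith]
        exact chain'_getElem hch (j + (m - (i+1))) (by omega)
  · intro x hx
    rcases List.mem_append.1 hx with h | h
    · exact hmem x (List.take_subset _ _ h)
    · exact hmem x (List.drop_subset _ _ h)
  · rw [List.head?_eq_getElem?, List.getElem?_eq_getElem (by omega : 0 < (l.take (i+1) ++ l.drop j).length)]
    have := hget 0 (by omega)
    rw [if_pos (by omega)] at this
    rw [this]
    rw [List.head?_eq_getElem?, List.getElem?_eq_getElem (by omega)] at hhd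
    exact hhd
  · rw [List.getLast?_eq_getElem?, List.getElem?_eq_getElem (by omega : (l.take (i+1) ++ l.drop j).length - 1 < (l.take (i+1) ++ l.drop j).length)]
    have hm : (l.take (i+1) ++ l.drop j).length - 1 = i + (l.length - j) := by omega
    have := hget (i + (l.length - j)) (by omega)
    rw [if_neg (by omega)] at this
    simp only [hm, this]
    rw [List.getLast?_eq_getElem?, List.getElem?_eq_getElem (by omega)] at hlast
    convert hlast using 3
    omega

lemma walkSpec_take {l : List Ω} (hw : WalkSpec Γ G' g g' l)
    {i : ℕ} (hi : i < l.length) (hval : l[i] = g') :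
    WalkSpec Γ G' g g' (l.take (i+1)) ∧ (l.take (i+1)).length = i + 1 := by
  obtain ⟨hch, hmem, hhd, hlast⟩ := hw
  have hlen : (l.take (i+1)).length = i + 1 := by simp; omega
  refine ⟨⟨hch.take _, fun x hx => hmem x (List.take_subset _ _ hx), ?_, ?_⟩, hlen⟩
  · rw [List.head?_eq_getElem?, List.getElem?_eq_getElem (by omega : 0 < (l.take (i+1)).length)]
    simp only [List.getElem_take]
    rw [List.head?_eq_getElem?, List.getElem?_eq_getElem (by omega)] at hhd
    exact hhd
  · rw [List.getLast?_eq_getElem?, List.getElem?_eq_getElem (by omega : (l.take (i+1)).length - 1 < (l.take (i+1)).length)]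
    have : (l.take (i+1)).length - 1 = i := by omega
    simp only [this, List.getElem_take]
    rw [hval]

end Stmt6Aux2

section Stmt6Aux3

variable {Γ : ι → Set Ω} {G' : Set Ω} {g g' : Ω}

lemma exists_primitive_path (hk : ∀ x ∈ G', (idx Γ x).encard ≤ 2)
    (hreach : ReachIn Γ G' g g') :
    ∃ l : List Ω, IsPrimitivePath Γ l ∧ (∀ x ∈ l, x ∈ G') ∧
      l.head? = some g ∧ l.getLast? = some g' := by
  classical
  have hex : ∃ n : ℕ, ∃ l : List Ω, WalkSpec Γ G' g g' l ∧ l.length = n := by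
    obtain ⟨l, h1, h2, h3, h4⟩ := hreach
    exact ⟨l.length, l, ⟨h1, h2, h3, h4⟩, rfl⟩
  obtain ⟨l, hw, hlen⟩ := Nat.find_spec hex
  have hmin : ∀ l' : List Ω, WalkSpec Γ G' g g' l' → l.length ≤ l'.length := by
    intro l' h'
    have := Nat.find_min' hex (m := l'.length) ⟨l', h', rfl⟩
    omega
  have hne : l ≠ [] := hw.ne_nil
  have hpos : 0 < l.length := List.length_pos_iff.2 hne
  -- no duplicates
  have hnd : l.Nodup := by
    rw [List.nodup_iff_getElem?_ne_getElem?]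
    intro i j hij hj heq
    rw [List.getElem?_eq_getElem (by omega), List.getElem?_eq_getElem hj] at heq
    have heq' : l[i]'(by omega) = l[j]'hj := Option.some.inj heq
    by_cases hcase : j + 1 < l.length
    · have hadj : Adj Γ (l[i]'(by omega)) (l[j+1]'hcase) := by
        rw [heq']; exact chain'_getElem hw.1 j hcase
      obtain ⟨hw2, hlen2⟩ := walkSpec_splice hw (by omega : i < j + 1) hcase hadj
      have := hmin _ hw2
      omega
    · have hj' : j = l.length - 1 := by omega
      have hval : l[i]'(by omega) = g' := by
        rw [heq']
        have := hw.getElem_last (by omega)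
        convert this using 2
      obtain ⟨hw2, hlen2⟩ := walkSpec_take hw (by omega : i < l.length) hval
      have := hmin _ hw2
      omega
  -- primitivity
  have hprim : PrimitiveOn Γ l := by
    intro k
    by_contra hlt
    push_neg at hlt
    have hfin : ({x : Ω | x ∈ l ∧ x ∈ Γ k}).Finite :=
      (List.finite_toSet l).subset fun z hz => hz.1
    obtain ⟨a, ha, b, hb, c, hc, hab, hac, hbc⟩ := (Set.two_lt_ncard hfin).1 hlt
    obtain ⟨pa, hpa, rfl⟩ := List.mem_iff_getElem.1 ha.1
    obtain ⟨pb, hpb, rfl⟩ := List.mem_iff_getElem.1 hb.1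
    obtain ⟨pc, hpc, rfl⟩ := List.mem_iff_getElem.1 hc.1
    have key : ∀ (u w : ℕ) (hu : u < l.length) (hww : w < l.length), u + 2 ≤ w →
        l[u] ∈ Γ k → l[w] ∈ Γ k → l[u] ≠ l[w] → False := by
      intro u w hu hww h2 m1 m2 hneq
      have hadj : Adj Γ (l[u]'hu) (l[w]'hww) := ⟨hneq, k, m1, m2⟩
      obtain ⟨hw2, hlen2⟩ := walkSpec_splice hw (by omega : u < w) hww hadj
      have := hmin _ hw2
      omega
    have hpab : pa ≠ pb := fun h => hab (by subst h; rfl)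
    have hpac : pa ≠ pc := fun h => hac (by subst h; rfl)
    have hpbc : pb ≠ pc := fun h => hbc (by subst h; rfl)
    rcases Nat.lt_trichotomy pa pb with h1 | h1 | h1
    · rcases Nat.lt_trichotomy pb pc with h2 | h2 | h2
      · exact key pa pc hpa hpc (by omega) ha.2 hc.2 hac
      · exact absurd h2 hpbc
      · rcases Nat.lt_trichotomy pa pc with h3 | h3 | h3
        · exact key pa pb hpa hpb (by omega) ha.2 hb.2 hab
        · exact absurd h3 hpac
        · exact key pc pb hpc hpb (by omega) hc.2 hb.2 (Ne.symm hbc)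
    · exact absurd h1 hpab
    · rcases Nat.lt_trichotomy pa pc with h2 | h2 | h2
      · exact key pb pc hpb hpc (by omega) hb.2 hc.2 hbc
      · exact absurd h2 hpac
      · rcases Nat.lt_trichotomy pb pc with h3 | h3 | h3
        · exact key pb pa hpb hpa (by omega) hb.2 ha.2 (Ne.symm hab)
        · exact absurd h3 hpbc
        · exact key pc pa hpc hpa (by omega) hc.2 ha.2 (Ne.symm hac)
  exact ⟨l, ⟨⟨⟨hne, hw.1, edgeList_nodup_of_nodup hnd⟩,
    simpleOn_of_primitiveOn (fun x hx => hk x (hw.2.1 x hx)) hprim⟩, hprim⟩,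
    hw.2.1, hw.2.2.1, hw.2.2.2⟩

end Stmt6Aux3

section Stmt6Aux4

variable {Γ : ι → Set Ω} {G' : Set Ω} {g g' : Ω}

lemma prim_path_dup {l : List Ω} (hk : ∀ x ∈ l, (idx Γ x).encard ≤ 2)
    (hch : l.Chain' (Adj Γ)) (hed : (edgeList l).Nodup) (hprim : PrimitiveOn Γ l)
    {i j : ℕ} (hij : i < j) (hj : j < l.length) (heq : l[i]'(by omega) = l[j]) :
    i = 0 ∧ j = l.length - 1 := by
  have hi : i < l.length := by omega
  have gc : ∀ (a b : ℕ) (ha : a < l.length) (hb : b < l.length), a = b →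
      l[a]'ha = l[b]'hb := by
    intro a b ha hb h; subst h; rfl
  have hij2 : i + 2 ≤ j := by
    rcases Nat.lt_or_ge (i+1) j with h | h
    · omega
    · have hj1 : j = i + 1 := by omega
      subst hj1
      exact absurd heq (chain'_getElem hch i hj).1
  have hedlen : (edgeList l).length = l.length - 1 := edgeList_length l
  have hedne : ∀ (a b : ℕ) (ha : a + 1 < l.length) (hb : b + 1 < l.length), a ≠ b →
      s(l[a]'(by omega), l[a+1]'ha) ≠ s(l[b]'(by omega), l[b+1]'hb) := by
    intro a b ha hb hab hcontra
    have e1 : (edgeList l)[a]'(by omega) = s(l[a]'(by omega), l[a+1]'ha) := edgeList_getElem ha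
    have e2 : (edgeList l)[b]'(by omega) = s(l[b]'(by omega), l[b+1]'hb) := edgeList_getElem hb
    have := hed.getElem_inj_iff (i := a) (hi := by rw [hedlen]; omega)
      (j := b) (hj := by rw [hedlen]; omega)
    rw [e1, e2] at this
    exact hab (this.1 hcontra)
  constructor
  · -- i = 0
    by_contra hi0
    have hi1 : 1 ≤ i := by omega
    have hx : i - 1 + 1 < l.length := by omega
    have hyp : i + 1 < l.length := by omega
    have hz : j - 1 + 1 < l.length := by omega
    have hadjx : Adj Γ (l[i-1]'(by omega)) (l[i]'hi) := by
      have := chain'_getElem hch (i-1) hx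
      rwa [gc (i-1+1) i hx hi (by omega)] at this
    have hadjy : Adj Γ (l[i]'hi) (l[i+1]'hyp) := chain'_getElem hch i hyp
    have hadjz : Adj Γ (l[j-1]'(by omega)) (l[j]'hj) := by
      have := chain'_getElem hch (j-1) hz
      rwa [gc (j-1+1) j hz hj (by omega)] at this
    have hadjx' : Adj Γ (l[i]'hi) (l[i-1]'(by omega)) := hadjx.symm2
    have hadjz' : Adj Γ (l[i]'hi) (l[j-1]'(by omega)) := by
      rw [heq]; exact hadjz.symm2
    have d12 : s(l[i-1]'(by omega), l[i-1+1]'hx) ≠ s(l[i]'hi, l[i+1]'hyp) :=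
      hedne (i-1) i hx hyp (by omega)
    have d13 : s(l[i-1]'(by omega), l[i-1+1]'hx) ≠ s(l[j-1]'(by omega), l[j-1+1]'hz) :=
      hedne (i-1) (j-1) hx hz (by omega)
    have d23 : s(l[i]'hi, l[i+1]'hyp) ≠ s(l[j-1]'(by omega), l[j-1+1]'hz) :=
      hedne i (j-1) hyp hz (by omega)
    have e1 : (l[i-1+1]'hx) = l[i]'hi := gc _ _ _ _ (by omega)
    have e2 : (l[j-1+1]'hz) = l[i]'hi := by
      rw [heq]; exact gc _ _ _ _ (by omega)
    have hxy : (l[i-1]'(by omega)) ≠ (l[i+1]'hyp) := by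
      intro hcon
      exact d12 (by rw [e1, hcon, Sym2.eq_swap])
    have hxz : (l[i-1]'(by omega)) ≠ (l[j-1]'(by omega)) := by
      intro hcon
      exact d13 (by rw [e1, e2, hcon])
    have hyz : (l[i+1]'hyp) ≠ (l[j-1]'(by omega)) := by
      intro hcon
      exact d23 (by rw [e2, hcon, Sym2.eq_swap])
    exact prim3 (hk _ (List.getElem_mem hi)) hprim (List.getElem_mem hi)
      (List.getElem_mem (by omega)) (List.getElem_mem hyp) (List.getElem_mem (by omega))
      hxy hxz hyz hadjx' hadjy hadjz'
  · -- j = l.length - 1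
    by_contra hjl
    have hjp : j + 1 < l.length := by omega
    have hyp : i + 1 < l.length := by omega
    have hz : j - 1 + 1 < l.length := by omega
    have hadjy : Adj Γ (l[i]'hi) (l[i+1]'hyp) := chain'_getElem hch i hyp
    have hadjz : Adj Γ (l[j-1]'(by omega)) (l[j]'hj) := by
      have := chain'_getElem hch (j-1) hz
      rwa [gc (j-1+1) j hz hj (by omega)] at this
    have hadjw : Adj Γ (l[j]'hj) (l[j+1]'hjp) := chain'_getElem hch j hjp
    have hadjz' : Adj Γ (l[i]'hi) (l[j-1]'(by omega)) := by
      rw [heq]; exact hadjz.symm2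
    have hadjw' : Adj Γ (l[i]'hi) (l[j+1]'hjp) := by
      rw [heq]; exact hadjw
    have d12 : s(l[i]'hi, l[i+1]'hyp) ≠ s(l[j-1]'(by omega), l[j-1+1]'hz) :=
      hedne i (j-1) hyp hz (by omega)
    have d13 : s(l[i]'hi, l[i+1]'hyp) ≠ s(l[j]'hj, l[j+1]'hjp) :=
      hedne i j hyp hjp (by omega)
    have d23 : s(l[j-1]'(by omega), l[j-1+1]'hz) ≠ s(l[j]'hj, l[j+1]'hjp) :=
      hedne (j-1) j hz hjp (by omega)
    have e2 : (l[j-1+1]'hz) = l[i]'hi := by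
      rw [heq]; exact gc _ _ _ _ (by omega)
    have e3 : (l[j]'hj) = l[i]'hi := heq.symm
    have hyz : (l[i+1]'hyp) ≠ (l[j-1]'(by omega)) := by
      intro hcon
      exact d12 (by rw [e2, hcon, Sym2.eq_swap])
    have hyw : (l[i+1]'hyp) ≠ (l[j+1]'hjp) := by
      intro hcon
      exact d13 (by rw [e3, hcon])
    have hzw : (l[j-1]'(by omega)) ≠ (l[j+1]'hjp) := by
      intro hcon
      exact d23 (by rw [e2, e3, hcon, Sym2.eq_swap])
    exact prim3 (hk _ (List.getElem_mem hi)) hprim (List.getElem_mem hi)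
      (List.getElem_mem hyp) (List.getElem_mem (by omega)) (List.getElem_mem hjp)
      hyz hyw hzw hadjy hadjz' hadjw'

lemma prim_path_nodup {l : List Ω} (hk : ∀ x ∈ l, (idx Γ x).encard ≤ 2)
    (hpath : IsPrimitivePath Γ l) (hhd : l.head? = some g) (hlast : l.getLast? = some g')
    (hne : g ≠ g') : l.Nodup := by
  rw [List.nodup_iff_getElem?_ne_getElem?]
  intro i j hij hj heq
  rw [List.getElem?_eq_getElem (by omega), List.getElem?_eq_getElem hj] at heq
  have heq' : l[i]'(by omega) = l[j]'hj := Option.some.inj heq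
  obtain ⟨h0, hlen1⟩ := prim_path_dup hk hpath.1.1.2.1 hpath.1.1.2.2 hpath.2 hij hj heq'
  apply hne
  subst h0
  subst hlen1
  rw [List.head?_eq_getElem?, List.getElem?_eq_getElem (by omega)] at hhd
  rw [List.getLast?_eq_getElem?, List.getElem?_eq_getElem (by omega)] at hlast
  rw [← Option.some.inj hhd, ← Option.some.inj hlast]
  exact heq'

lemma prim_cycle_of_closed_path {l : List Ω} (hk : ∀ x ∈ l, (idx Γ x).encard ≤ 2)
    (hpath : IsPrimitivePath Γ l) (hhd : l.head? = some g) (hlast : l.getLast? = some g)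
    (hlen : 2 ≤ l.length) : IsPrimitiveCycle Γ l := by
  refine ⟨⟨⟨hpath.1.1, ?_, hlen, ?_⟩, hpath.1.2⟩, hpath.2⟩
  · rw [hhd, hlast]
  · rw [List.nodup_iff_getElem?_ne_getElem?]
    intro i j hij hj heq
    rw [List.length_dropLast] at hj
    have hj' : j < l.length := by omega
    rw [List.getElem?_eq_getElem (by rw [List.length_dropLast]; omega),
      List.getElem?_eq_getElem (by rw [List.length_dropLast]; omega)] at heq
    simp only [List.getElem_dropLast] at heq
    have heq' := Option.some.inj heq
    obtain ⟨h0, hlen1⟩ := prim_path_dup hk hpath.1.1.2.1 hpath.1.1.2.2 hpath.2 hij hj' heq'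
    omega

end Stmt6Aux4

/-- Adjacency of the vertex-set incidence graph. -/
def BAdj (Γ : ι → Set Ω) (G' : Set Ω) : (Ω ⊕ ι) → (Ω ⊕ ι) → Prop
  | .inl v, .inr k => v ∈ G' ∧ v ∈ Γ k
  | .inr k, .inl v => v ∈ G' ∧ v ∈ Γ k
  | _, _ => False

/-- The incidence graph between vertices of `G'` and the sets `Ω_k`. -/
def BG (Γ : ι → Set Ω) (G' : Set Ω) : SimpleGraph (Ω ⊕ ι) where
  Adj := BAdj Γ G'
  symm := by
    constructor
    rintro (v | k) (w | j) h
    · exact h.elim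
    · exact h
    · exact h
    · exact h.elim
  loopless := by constructor; rintro (v | k) h <;> exact h.elim

/-- Interleave a list of vertices and a list of indices. -/
def ilv : List Ω → List ι → List (Ω ⊕ ι)
  | x :: xs, k :: ks => .inl x :: .inr k :: ilv xs ks
  | x :: _, [] => [.inl x]
  | [], _ => []

section Stmt6Aux5

variable {Γ : ι → Set Ω} {G' : Set Ω} {g g' : Ω}

lemma bg_adj_lr {v : Ω} {k : ι} (h : (BG Γ G').Adj (.inl v) (.inr k)) :
    v ∈ G' ∧ v ∈ Γ k := h

lemma bg_adj_ll {v w : Ω} (h : (BG Γ G').Adj (.inl v) (.inl w)) : False := h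

lemma bg_adj_rr {k j : ι} (h : (BG Γ G').Adj (.inr k) (.inr j)) : False := h

lemma ilv_length : ∀ (l : List Ω) (ks : List ι),
    (l.length = ks.length + 1 ∨ l.length = ks.length) →
    (ilv l ks).length = l.length + ks.length := by
  intro l
  induction l with
  | nil =>
    intro ks h
    match ks with
    | [] => simp [ilv]
    | k :: ks => simp at h
  | cons x xs ih =>
    intro ks h
    match ks with
    | [] =>
      simp at h
      simp [ilv, h]
    | k :: ks =>
      have := ih ks (by simp at h; omega)
      simp [ilv, this]
      omega

lemma mem_ilv_inl : ∀ (l : List Ω) (ks : List ι) (x : Ω),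
    (Sum.inl x : Ω ⊕ ι) ∈ ilv l ks → x ∈ l := by
  intro l
  induction l with
  | nil => intro ks x h; simp [ilv] at h
  | cons y xs ih =>
    intro ks x h
    match ks with
    | [] =>
      simp [ilv] at h
      simp [h]
    | k :: ks =>
      simp only [ilv, List.mem_cons] at h
      rcases h with h | h | h
      · simp [Sum.inl.inj h]
      · exact absurd h (by simp)
      · exact List.mem_cons_of_mem _ (ih ks x h)

lemma mem_ilv_inr : ∀ (l : List Ω) (ks : List ι) (k : ι),
    (Sum.inr k : Ω ⊕ ι) ∈ ilv l ks → k ∈ ks := by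
  intro l
  induction l with
  | nil => intro ks k h; simp [ilv] at h
  | cons y xs ih =>
    intro ks k h
    match ks with
    | [] =>
      simp [ilv] at h
    | k' :: ks =>
      simp only [ilv, List.mem_cons] at h
      rcases h with h | h | h
      · exact absurd h (by simp)
      · simp [Sum.inr.inj h]
      · exact List.mem_cons_of_mem _ (ih ks k h)

lemma ilv_nodup : ∀ (l : List Ω) (ks : List ι), l.Nodup → ks.Nodup →
    (ilv l ks).Nodup := by
  intro l
  induction l with
  | nil => intro ks _ _; match ks with
    | [] => simp [ilv]
    | k :: ks => simp [ilv]
  | cons x xs ih =>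
    intro ks hl hks
    match ks with
    | [] => simp [ilv]
    | k :: ks =>
      refine List.nodup_cons.2 ⟨?_, List.nodup_cons.2 ⟨?_, ?_⟩⟩
      · intro h
        rcases List.mem_cons.1 h with h | h
        · exact absurd h (by simp)
        · exact (List.nodup_cons.1 hl).1 (mem_ilv_inl _ _ _ h)
      · intro h
        exact (List.nodup_cons.1 hks).1 (mem_ilv_inr _ _ _ h)
      · exact ih ks (List.nodup_cons.1 hl).2 (List.nodup_cons.1 hks).2

lemma ilv_filterMap : ∀ (l : List Ω) (ks : List ι),
    (l.length = ks.length + 1 ∨ l.length = ks.length) →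
    (ilv l ks).filterMap Sum.getLeft? = l := by
  intro l
  induction l with
  | nil =>
    intro ks h
    match ks with
    | [] => simp [ilv]
    | k :: ks => simp at h
  | cons x xs ih =>
    intro ks h
    match ks with
    | [] =>
      simp at h
      simp [ilv, h]
    | k :: ks =>
      have := ih ks (by simp at h; omega)
      simp only [ilv, List.filterMap_cons]
      simp [this]

lemma ilv_getElem?_even : ∀ (l : List Ω) (ks : List ι),
    (l.length = ks.length + 1 ∨ l.length = ks.length) → ∀ (i : ℕ),
    (ilv l ks)[2*i]? = (l[i]?).map Sum.inl := by
  intro l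
  induction l with
  | nil =>
    intro ks h i
    match ks with
    | [] => simp [ilv]
    | k :: ks => simp at h
  | cons x xs ih =>
    intro ks h i
    match ks with
    | [] =>
      have hxs : xs = [] := by simp at h; exact h
      subst hxs
      match i with
      | 0 => simp [ilv]
      | i + 1 => simp [ilv]
    | k :: ks =>
      match i with
      | 0 => simp [ilv]
      | i + 1 =>
        have e : 2 * (i + 1) = (2 * i + 1) + 1 := by ring
        rw [e]
        simp only [ilv, List.getElem?_cons_succ]
        exact ih ks (by simp at h; omega) i

lemma ilv_getElem?_odd : ∀ (l : List Ω) (ks : List ι),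
    (l.length = ks.length + 1 ∨ l.length = ks.length) → ∀ (i : ℕ),
    (ilv l ks)[2*i+1]? = (ks[i]?).map Sum.inr := by
  intro l
  induction l with
  | nil =>
    intro ks h i
    match ks with
    | [] => simp [ilv]
    | k :: ks => simp at h
  | cons x xs ih =>
    intro ks h i
    match ks with
    | [] =>
      have hxs : xs = [] := by simp at h; exact h
      subst hxs
      match i with
      | 0 => simp [ilv]
      | i + 1 => simp [ilv]
    | k :: ks =>
      match i with
      | 0 => simp [ilv]
      | i + 1 =>
        have e : 2 * (i + 1) + 1 = (2 * i + 1 + 1) + 1 := by ring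
        rw [e]
        simp only [ilv, List.getElem?_cons_succ]
        exact ih ks (by simp at h; omega) i

end Stmt6Aux5

section Stmt6Aux6

variable {Γ : ι → Set Ω} {G' : Set Ω} {g g' : Ω}

lemma bg_adj_mk {v : Ω} {k : ι} (h1 : v ∈ G') (h2 : v ∈ Γ k) :
    (BG Γ G').Adj (.inl v) (.inr k) := ⟨h1, h2⟩

lemma bg_adj_mk' {v : Ω} {k : ι} (h1 : v ∈ G') (h2 : v ∈ Γ k) :
    (BG Γ G').Adj (.inr k) (.inl v) := ⟨h1, h2⟩

lemma three_in_set {l : List Ω} {k : ι} {a b c : Ω} (hprim : PrimitiveOn Γ l)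
    (ha : a ∈ l) (hb : b ∈ l) (hc : c ∈ l) (hab : a ≠ b) (hac : a ≠ c) (hbc : b ≠ c)
    (h1 : a ∈ Γ k) (h2 : b ∈ Γ k) (h3 : c ∈ Γ k) : False := by
  have hfin : ({x : Ω | x ∈ l ∧ x ∈ Γ k}).Finite :=
    (List.finite_toSet l).subset fun z hz => hz.1
  have hlt : 2 < ({x : Ω | x ∈ l ∧ x ∈ Γ k}).ncard :=
    (Set.two_lt_ncard hfin).2 ⟨a, ⟨ha, h1⟩, b, ⟨hb, h2⟩, c, ⟨hc, h3⟩, hab, hac, hbc⟩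
  exact absurd (hprim k) (by omega)

lemma walk_of_chain : ∀ (l : List Ω) (g g' : Ω), l.Chain' (Adj Γ) → (∀ x ∈ l, x ∈ G') →
    l.head? = some g → l.getLast? = some g' →
    ∃ (ks : List ι) (p : (BG Γ G').Walk (.inl g) (.inl g')),
      p.support = ilv l ks ∧ l.length = ks.length + 1 ∧
      ∀ (i : ℕ) (hi : i < ks.length) (hl1 : i < l.length) (hl2 : i + 1 < l.length),
        (l[i]'hl1) ∈ Γ (ks[i]'hi) ∧ (l[i+1]'hl2) ∈ Γ (ks[i]'hi) := by
  intro l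
  induction l with
  | nil => intro g g' _ _ hhd _; exact absurd hhd (by simp)
  | cons x xs ih =>
    intro g g' hch hmem hhd hlast
    rw [List.head?_cons] at hhd
    have hgx : x = g := Option.some.inj hhd
    subst hgx
    cases xs with
    | nil =>
      rw [List.getLast?_singleton] at hlast
      have hgg : x = g' := Option.some.inj hlast
      subst hgg
      refine ⟨[], SimpleGraph.Walk.nil, ?_, by simp, ?_⟩
      · simp [ilv]
      · intro i hi
        simp at hi
    | cons y t =>
      rw [List.Chain', List.isChain_cons_cons] at hch
      obtain ⟨hadj, hch'⟩ := hch
      obtain ⟨k, hgk, hyk⟩ := hadj.2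
      rw [List.getLast?_cons_cons] at hlast
      obtain ⟨ks', p', hsup, hlen, hprop⟩ :=
        ih y g' hch' (fun z hz => hmem z (List.mem_cons_of_mem _ hz)) rfl hlast
      have hgG : x ∈ G' := hmem x (by simp)
      have hyG : y ∈ G' := hmem y (by simp)
      refine ⟨k :: ks', SimpleGraph.Walk.cons (bg_adj_mk hgG hgk)
        (SimpleGraph.Walk.cons (bg_adj_mk' hyG hyk) p'), ?_, by simp [hlen], ?_⟩
      · rw [SimpleGraph.Walk.support_cons, SimpleGraph.Walk.support_cons, hsup]
        rfl
      · intro i hi hl1 hl2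
        match i with
        | 0 => exact ⟨hgk, hyk⟩
        | i + 1 =>
          simp only [List.getElem_cons_succ]
          exact hprop i (by simpa using hi) (by simpa using hl1) (by simpa using hl2)

lemma path_of_prim {l : List Ω} (hpp : IsPrimitivePath Γ l)
    (hmem : ∀ x ∈ l, x ∈ G') (hk : ∀ x ∈ G', (idx Γ x).encard ≤ 2)
    (hhd : l.head? = some g) (hlast : l.getLast? = some g') (hne : g ≠ g') :
    ∃ p : (BG Γ G').Walk (.inl g) (.inl g'),
      p.IsPath ∧ p.support.filterMap Sum.getLeft? = l := by
  have hnd : l.Nodup := prim_path_nodup (fun x hx => hk x (hmem x hx)) hpp hhd hlast hne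
  obtain ⟨ks, p, hsup, hlen, hprop⟩ := walk_of_chain l g g' hpp.1.1.2.1 hmem hhd hlast
  have hksnd : ks.Nodup := by
    rw [List.nodup_iff_getElem?_ne_getElem?]
    intro i j hij hj heq
    rw [List.getElem?_eq_getElem (by omega), List.getElem?_eq_getElem hj] at heq
    have heq' : ks[i]'(by omega) = ks[j]'hj := Option.some.inj heq
    obtain ⟨m1, m2⟩ := hprop i (by omega) (by omega) (by omega)
    obtain ⟨m3, m4⟩ := hprop j hj (by omega) (by omega)
    rw [← heq'] at m4
    have d1 : (l[i]'(by omega)) ≠ (l[i+1]'(by omega)) := by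
      intro hcon; have := hnd.getElem_inj_iff.1 hcon; omega
    have d2 : (l[i]'(by omega)) ≠ (l[j+1]'(by omega)) := by
      intro hcon; have := hnd.getElem_inj_iff.1 hcon; omega
    have d3 : (l[i+1]'(by omega)) ≠ (l[j+1]'(by omega)) := by
      intro hcon; have := hnd.getElem_inj_iff.1 hcon; omega
    exact three_in_set hpp.2 (List.getElem_mem _) (List.getElem_mem _)
      (List.getElem_mem _) d1 d2 d3 m1 m2 m4
  refine ⟨p, ?_, ?_⟩
  · rw [SimpleGraph.Walk.isPath_def, hsup]
    exact ilv_nodup l ks hnd hksnd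
  · rw [hsup]
    exact ilv_filterMap l ks (Or.inl hlen)

end Stmt6Aux6

section Stmt6Aux7

variable {Γ : ι → Set Ω} {G' : Set Ω}

lemma bg_adj_rl {v : Ω} {k : ι} (h : (BG Γ G').Adj (.inr k) (.inl v)) :
    v ∈ G' ∧ v ∈ Γ k := h

lemma ext_walk (n : ℕ) : ∀ {y : Ω ⊕ ι} (v : Ω) (p : (BG Γ G').Walk (.inl v) y),
    p.length = n →
    ∃ (l : List Ω) (ks : List ι), p.support = ilv l ks ∧ l.head? = some v ∧
      (l.length = ks.length + 1 ∨ l.length = ks.length) ∧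
      (∀ w : Ω, y = .inl w → l.getLast? = some w ∧ l.length = ks.length + 1) ∧
      (∀ (i : ℕ) (hi : i < ks.length) (hl1 : i < l.length),
        (l[i]'hl1) ∈ G' ∧ (l[i]'hl1) ∈ Γ (ks[i]'hi) ∧
        ∀ (hl2 : i + 1 < l.length), (l[i+1]'hl2) ∈ G' ∧ (l[i+1]'hl2) ∈ Γ (ks[i]'hi)) := by
  induction n using Nat.strong_induction_on with
  | _ n IH =>
    intro y v p hn
    cases p with
    | nil =>
      refine ⟨[v], [], by simp [ilv], rfl, Or.inl (by simp), ?_, ?_⟩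
      · intro w hw
        exact ⟨by rw [Sum.inl.inj hw]; simp, by simp⟩
      · intro i hi; simp at hi
    | @cons _ m _ h q =>
      cases m with
      | inl w => exact (bg_adj_ll h).elim
      | inr k =>
        cases q with
        | nil =>
          refine ⟨[v], [k], by simp [ilv], rfl, Or.inr (by simp), ?_, ?_⟩
          · intro w hw; exact absurd hw (by simp)
          · intro i hi hl1
            have hi0 : i = 0 := by simp at hi; omega
            subst hi0
            obtain ⟨h1, h2⟩ := bg_adj_lr h
            refine ⟨h1, h2, ?_⟩
            intro hl2
            simp at hl2
        | @cons _ m2 _ h2 q2 =>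
          cases m2 with
          | inr k2 => exact (bg_adj_rr h2).elim
          | inl v2 =>
            have hlen2 : q2.length = n - 2 ∧ 2 ≤ n := by
              simp [SimpleGraph.Walk.length_cons] at hn
              omega
            obtain ⟨l', ks', hsup, hhead, hshape, hend, hprop⟩ :=
              IH (n - 2) (by omega) v2 q2 hlen2.1
            have hl'ne : l' ≠ [] := by
              intro hcon; rw [hcon] at hhead; exact absurd hhead (by simp)
            have hl'pos : 0 < l'.length := List.length_pos_iff.2 hl'ne
            have hl'0 : l'[0]'hl'pos = v2 := by
              rw [List.head?_eq_getElem?, List.getElem?_eq_getElem hl'pos] at hhead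
              exact Option.some.inj hhead
            obtain ⟨hB1, hB2⟩ := bg_adj_rl h2
            refine ⟨v :: l', k :: ks', ?_, rfl, ?_, ?_, ?_⟩
            · rw [SimpleGraph.Walk.support_cons, SimpleGraph.Walk.support_cons, hsup]
              rfl
            · rcases hshape with h' | h'
              · exact Or.inl (by simp [h'])
              · exact Or.inr (by simp [h'])
            · intro w hw
              obtain ⟨he1, he2⟩ := hend w hw
              constructor
              · obtain ⟨a, l'', rfl⟩ := List.exists_cons_of_ne_nil hl'ne
                rw [List.getLast?_cons_cons]
                exact he1
              · simp [he2]
            · intro i hi hl1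
              match i with
              | 0 =>
                obtain ⟨hA1, hA2⟩ := bg_adj_lr h
                refine ⟨hA1, hA2, ?_⟩
                intro hl2
                have : (v :: l')[0+1]'hl2 = v2 := by
                  simp only [List.getElem_cons_succ]
                  exact hl'0
                rw [this]
                exact ⟨hB1, hB2⟩
              | i + 1 =>
                simp only [List.getElem_cons_succ]
                have hi' : i < ks'.length := by simpa using hi
                have hl1' : i < l'.length := by simpa using hl1
                obtain ⟨hc1, hc2, hc3⟩ := hprop i hi' hl1'
                refine ⟨hc1, hc2, ?_⟩
                intro hl2
                exact hc3 (by simpa using hl2)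

end Stmt6Aux7

section Stmt6Aux8

variable {Γ : ι → Set Ω} {G' : Set Ω}

lemma bg_acyclic (ha1 : ∀ x ∈ G', ∀ x' ∈ G', x ≠ x' → idx Γ x ≠ idx Γ x')
    (hk : ∀ x ∈ G', (idx Γ x).encard ≤ 2)
    (hnoprim : ¬ ∃ l : List Ω, IsPrimitiveCycle Γ l ∧ ∀ x ∈ l, x ∈ G') :
    (BG Γ G').IsAcyclic := by
  classical
  intro x0 c0 hc0
  obtain ⟨v, hv⟩ : ∃ v : Ω, (Sum.inl v : Ω ⊕ ι) ∈ c0.support := by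
    cases x0 with
    | inl w => exact ⟨w, c0.start_mem_support⟩
    | inr k =>
      cases c0 with
      | nil => exact absurd rfl hc0.ne_nil
      | @cons _ m _ h q =>
        cases m with
        | inl w =>
          exact ⟨w, by
            rw [SimpleGraph.Walk.support_cons]
            exact List.mem_cons_of_mem _ q.start_mem_support⟩
        | inr k2 => exact (bg_adj_rr h).elim
  have hc : (c0.rotate _ hv).IsCycle := hc0.rotate hv
  set c := c0.rotate _ hv with hcdef
  obtain ⟨l, ks, hsup, hhead, hshape, hend, hprop⟩ := ext_walk c.length v c rfl
  obtain ⟨hlast, hlen⟩ := hend v rfl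
  have hlenl : l.length = ks.length + 1 := hlen
  set t := ks.length with htdef
  have gcl : ∀ (a b : ℕ) (ha : a < l.length) (hb : b < l.length), a = b →
      l[a]'ha = l[b]'hb := by
    intro a b ha hb h; subst h; rfl
  have hslen : (ilv l ks).length = 2 * t + 1 := by
    rw [ilv_length l ks (Or.inl hlenl)]; omega
  have hclen : c.length = 2 * t := by
    have := c.length_support
    rw [hsup, hslen] at this; omega
  have ht2 : 2 ≤ t := by
    have := hc.three_le_length; omega
  have hgetE : ∀ (i : ℕ) (hi : i < l.length), (ilv l ks)[2*i]? = some (.inl (l[i]'hi)) := by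
    intro i hi
    rw [ilv_getElem?_even l ks (Or.inl hlenl) i, List.getElem?_eq_getElem hi]
    rfl
  have hgetO : ∀ (i : ℕ) (hi : i < t), (ilv l ks)[2*i+1]? = some (.inr (ks[i]'hi)) := by
    intro i hi
    rw [ilv_getElem?_odd l ks (Or.inl hlenl) i, List.getElem?_eq_getElem hi]
    rfl
  have htail : (ilv l ks).tail.Nodup := by
    rw [← hsup]
    exact ((SimpleGraph.Walk.isCycle_def _).mp hc).2.2
  have htlen : (ilv l ks).tail.length = 2 * t := by
    rw [List.length_tail, hslen]
    omega
  have htne := List.nodup_iff_getElem?_ne_getElem?.1 htail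
  have kinj : ∀ (i j : ℕ) (hi : i < t) (hj : j < t), ks[i]'hi = ks[j]'hj → i = j := by
    intro i j hi hj hij
    by_contra hne
    rcases Nat.lt_or_ge i j with h' | h'
    · exact htne (2*i) (2*j) (by omega) (by omega) (by
        rw [List.getElem?_tail, List.getElem?_tail, hgetO i hi, hgetO j hj, hij])
    · exact htne (2*j) (2*i) (by omega) (by omega) (by
        rw [List.getElem?_tail, List.getElem?_tail, hgetO i hi, hgetO j hj, hij])
  have vne : ∀ (i j : ℕ) (h1 : 1 ≤ i) (hij : i < j) (hj : j ≤ t),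
      (l[i]'(by omega)) ≠ (l[j]'(by omega)) := by
    intro i j h1 hij hj hcon
    refine htne (2*i-1) (2*j-1) (by omega) (by omega) ?_
    rw [List.getElem?_tail, List.getElem?_tail]
    have e1 : 2*i-1+1 = 2*i := by omega
    have e2 : 2*j-1+1 = 2*j := by omega
    rw [e1, e2, hgetE i (by omega), hgetE j (by omega), hcon]
  have h0v : l[0]'(by omega) = v := by
    rw [List.head?_eq_getElem?, List.getElem?_eq_getElem (by omega)] at hhead
    exact Option.some.inj hhead
  have htv : l[t]'(by omega) = v := by
    rw [List.getLast?_eq_getElem?, List.getElem?_eq_getElem (by omega)] at hlast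
    exact (gcl t (l.length - 1) (by omega) (by omega) (by omega)).trans
      (Option.some.inj hlast)
  have vneAll : ∀ (i j : ℕ) (hij : i < j) (hj : j ≤ t), ¬(i = 0 ∧ j = t) →
      (l[i]'(by omega)) ≠ (l[j]'(by omega)) := by
    intro i j hij hj hw hcon
    rcases Nat.lt_or_ge 0 i with h1 | h1
    · exact vne i j h1 hij hj hcon
    · have hi0 : i = 0 := by omega
      subst hi0
      have hjt : j < t := by
        rcases Nat.lt_or_ge j t with h' | h'
        · exact h'
        · exact absurd ⟨rfl, by omega⟩ hw
      refine vne j t (by omega) hjt (le_refl t) ?_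
      rw [← hcon, h0v, htv]
  have hmemL : ∀ (i : ℕ) (hi : i < l.length), (l[i]'hi) ∈ G' := by
    intro i hi
    rcases Nat.lt_or_ge i t with h' | h'
    · exact (hprop i h' (by omega)).1
    · have hit : i = t := by omega
      subst hit
      have h2 := (hprop 0 (by omega) (by omega)).1
      rw [h0v] at h2
      rw [htv]
      exact h2
  have hmemLmem : ∀ x ∈ l, x ∈ G' := by
    intro x hx
    obtain ⟨i, hi, rfl⟩ := List.mem_iff_getElem.1 hx
    exact hmemL i hi
  have hL : ∀ (i : ℕ) (hi : i < t), (l[i]'(by omega)) ∈ Γ (ks[i]'hi) :=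
    fun i hi => (hprop i hi (by omega)).2.1
  have hR : ∀ (i : ℕ) (hi : i < t), (l[i+1]'(by omega)) ∈ Γ (ks[i]'hi) :=
    fun i hi => ((hprop i hi (by omega)).2.2 (by omega)).2
  have hv1 : v ∈ Γ (ks[0]'(by omega)) := by
    have h := hL 0 (by omega)
    rwa [h0v] at h
  have hv2 : v ∈ Γ (ks[t-1]'(by omega)) := by
    have h := hR (t-1) (by omega)
    rw [gcl (t-1+1) t (by omega) (by omega) (by omega)] at h
    rwa [htv] at h
  have hkne0 : (ks[t-1]'(by omega)) ≠ (ks[0]'(by omega)) := by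
    intro hcon
    have := kinj (t-1) 0 (by omega) (by omega) hcon
    omega
  have hvG : v ∈ G' := by rw [← h0v]; exact hmemL 0 (by omega)
  have hidxmem : ∀ (i : ℕ) (hi : i < l.length) (k' : ι), (l[i]'hi) ∈ Γ k' →
      ∃ (m : ℕ) (hm : m < t), k' = ks[m]'hm ∧
        (i = m ∨ i = m + 1 ∨ (i = 0 ∧ m = t - 1) ∨ (i = t ∧ m = 0)) := by
    intro i hi k' hk'
    by_cases hcase : i = 0 ∨ i = t
    · have hlv : l[i]'hi = v := by
        rcases hcase with h' | h'
        · rw [← h0v]; exact gcl _ _ _ _ h'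
        · rw [← htv]; exact gcl _ _ _ _ h'
      rw [hlv] at hk'
      have hmem : k' ∈ idx Γ v := hk'
      rcases mem_pair_of_encard_le_two (hk v hvG) hv2 hv1 hkne0 hmem with h' | h'
      · refine ⟨t-1, by omega, h', ?_⟩
        rcases hcase with h'' | h''
        · right; right; left; exact ⟨h'', rfl⟩
        · right; left; omega
      · refine ⟨0, by omega, h', ?_⟩
        rcases hcase with h'' | h''
        · left; omega
        · right; right; right; exact ⟨h'', rfl⟩
    · push_neg at hcase
      have hi1 : 1 ≤ i := by omega
      have hit : i < t := by omega
      have hm1 : (l[i]'hi) ∈ Γ (ks[i-1]'(by omega)) := by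
        have := hR (i-1) (by omega)
        rwa [gcl (i-1+1) i (by omega) hi (by omega)] at this
      have hm2 : (l[i]'hi) ∈ Γ (ks[i]'hit) := hL i hit
      have hkne : (ks[i-1]'(by omega)) ≠ (ks[i]'hit) := by
        intro hcon
        have := kinj (i-1) i (by omega) hit hcon
        omega
      have hmem : k' ∈ idx Γ (l[i]'hi) := hk'
      rcases mem_pair_of_encard_le_two (hk _ (hmemL i hi)) hm1 hm2 hkne hmem with h' | h'
      · exact ⟨i-1, by omega, h', Or.inr (Or.inl (by omega))⟩
      · exact ⟨i, hit, h', Or.inl rfl⟩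
  have ht3 : 3 ≤ t := by
    by_contra hcon
    have ht2' : t = 2 := by omega
    have e01 : (l[0]'(by omega)) ≠ (l[1]'(by omega)) :=
      vneAll 0 1 (by omega) (by omega) (by omega)
    have hpair0 : ({ks[t-1]'(by omega), ks[0]'(by omega)} : Set ι) = idx Γ (l[0]'(by omega)) := by
      refine Set.Finite.eq_of_subset_of_encard_le (Set.toFinite _) ?_ ?_
      · intro z hz
        rcases hz with rfl | hz
        · rw [h0v]; exact hv2
        · rw [Set.mem_singleton_iff] at hz
          subst hz
          rw [h0v]; exact hv1
      · rw [Set.encard_pair hkne0]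
        exact hk _ (hmemL 0 (by omega))
    have hm1 : (l[1]'(by omega)) ∈ Γ (ks[0]'(by omega)) := hR 0 (by omega)
    have hm2 : (l[1]'(by omega)) ∈ Γ (ks[1]'(by omega)) := hL 1 (by omega)
    have hkne01 : (ks[0]'(by omega)) ≠ (ks[1]'(by omega)) := by
      intro hcon'
      have := kinj 0 1 (by omega) (by omega) hcon'
      omega
    have hpair1 : ({ks[0]'(by omega), ks[1]'(by omega)} : Set ι) = idx Γ (l[1]'(by omega)) := by
      refine Set.Finite.eq_of_subset_of_encard_le (Set.toFinite _) ?_ ?_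
      · intro z hz
        rcases hz with rfl | hz
        · exact hm1
        · rw [Set.mem_singleton_iff] at hz
          subst hz
          exact hm2
      · rw [Set.encard_pair hkne01]
        exact hk _ (hmemL 1 (by omega))
    have hidq : idx Γ (l[0]'(by omega)) = idx Γ (l[1]'(by omega)) := by
      rw [← hpair0, ← hpair1]
      have e1 : (ks[t-1]'(by omega)) = (ks[1]'(by omega)) := by
        congr 1
        omega
      rw [e1]
      exact Set.pair_comm _ _
    exact ha1 _ (hmemL 0 (by omega)) _ (hmemL 1 (by omega)) e01 hidq
  -- build the primitive cycle
  have hlne : l ≠ [] := by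
    intro hcon; rw [hcon] at hhead; exact absurd hhead (by simp)
  have hchain : l.Chain' (Adj Γ) := by
    refine chain'_of_getElem fun i hi => ?_
    have hit : i < t := by omega
    refine ⟨vneAll i (i+1) (by omega) (by omega) (by omega), ks[i]'hit, hL i hit, hR i hit⟩
  have hprim : PrimitiveOn Γ l := by
    intro k
    by_cases hex : ∃ (m : ℕ) (hm : m < t), k = ks[m]'hm
    · obtain ⟨m, hm, rfl⟩ := hex
      have hsub : {x : Ω | x ∈ l ∧ x ∈ Γ (ks[m]'hm)} ⊆
          {l[m]'(by omega), l[m+1]'(by omega)} := by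
        rintro x ⟨hx1, hx2⟩
        obtain ⟨i, hi, rfl⟩ := List.mem_iff_getElem.1 hx1
        obtain ⟨m', hm', hkeq, hcases⟩ := hidxmem i hi _ hx2
        have hmm : m' = m := kinj m' m hm' hm hkeq.symm
        subst hmm
        rcases hcases with h' | h' | h' | h'
        · left; exact gcl _ _ _ _ h'
        · right; rw [Set.mem_singleton_iff]; exact gcl _ _ _ _ h'
        · right; rw [Set.mem_singleton_iff]
          exact ((gcl i 0 hi (by omega) h'.1).trans h0v).trans
            (((gcl (m'+1) t (by omega) (by omega) (by omega)).trans htv).symm)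
        · left
          exact ((gcl i t hi (by omega) h'.1).trans htv).trans
            (((gcl m' 0 (by omega) (by omega) h'.2).trans h0v).symm)
      calc ({x : Ω | x ∈ l ∧ x ∈ Γ (ks[m]'hm)}).ncard
          ≤ ({l[m]'(by omega), l[m+1]'(by omega)} : Set Ω).ncard :=
            Set.ncard_le_ncard hsub (Set.toFinite _)
        _ ≤ 2 := by
            refine (Set.ncard_insert_le _ _).trans ?_
            simp
    · have hempty : {x : Ω | x ∈ l ∧ x ∈ Γ k} = ∅ := by
        ext x
        simp only [Set.mem_setOf_eq, Set.mem_empty_iff_false, iff_false]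
        rintro ⟨hx1, hx2⟩
        obtain ⟨i, hi, rfl⟩ := List.mem_iff_getElem.1 hx1
        obtain ⟨m', hm', hkeq, _⟩ := hidxmem i hi _ hx2
        exact hex ⟨m', hm', hkeq⟩
      rw [hempty]
      simp
  have hdropLast : l.dropLast.Nodup := by
    rw [List.nodup_iff_getElem?_ne_getElem?]
    intro i j hij hj heq
    rw [List.length_dropLast] at hj
    rw [List.getElem?_eq_getElem (by rw [List.length_dropLast]; omega),
      List.getElem?_eq_getElem (by rw [List.length_dropLast]; omega)] at heq
    simp only [List.getElem_dropLast] at heq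
    exact vneAll i j hij (by omega) (by omega) (Option.some.inj heq)
  have hedges : (edgeList l).Nodup := by
    rw [List.nodup_iff_getElem?_ne_getElem?]
    intro a b hab hb heq
    rw [edgeList_length] at hb
    have hb' : b + 1 < l.length := by omega
    have ha' : a + 1 < l.length := by omega
    rw [List.getElem?_eq_getElem (by rw [edgeList_length]; omega),
      List.getElem?_eq_getElem (by rw [edgeList_length]; omega)] at heq
    rw [edgeList_getElem ha', edgeList_getElem hb'] at heq
    have heq' := Option.some.inj heq
    rw [Sym2.eq_iff] at heq'
    rcases heq' with ⟨e1, e2⟩ | ⟨e1, e2⟩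
    · exact vneAll a b hab (by omega) (by omega) e1
    · -- l[a] = l[b+1], l[a+1] = l[b]
      rcases Nat.lt_or_ge (a+1) b with h' | h'
      · exact vneAll (a+1) b h' (by omega) (by omega) e2
      · have hab1 : a + 1 = b := by omega
        rcases Nat.lt_or_ge (b+1) t with h'' | h''
        · refine vneAll a (b+1) (by omega) (by omega) (by omega) e1
        · have hbt : b + 1 = t := by omega
          rcases Nat.lt_or_ge 0 a with h3 | h3
          · refine vneAll 0 a (by omega) (by omega) (by omega) ?_
            exact h0v.trans ((e1.trans ((gcl (b+1) t (by omega) (by omega) hbt).trans htv)).symm)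
          · omega
  have hhdlast : l.head? = l.getLast? := by rw [hhead, hlast]
  exact hnoprim ⟨l, ⟨⟨⟨⟨hlne, hchain, hedges⟩, hhdlast, by omega, hdropLast⟩,
    simpleOn_of_primitiveOn (fun x hx => hk x (hmemLmem x hx)) hprim⟩, hprim⟩, hmemLmem⟩

end Stmt6Aux8

/-- Corollary 2.4. -/
theorem stmt6 {Ω ι : Type*} [Countable Ω] (Γ : ι → Set Ω) (G' : Set Ω)
    (hconn : ConnectedOn Γ G')
    (ha1 : ∀ g ∈ G', ∀ g' ∈ G', g ≠ g' → idx Γ g ≠ idx Γ g')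
    (hk : ∀ g ∈ G', (idx Γ g).encard ≤ 2)
    (hnoprim : ¬ ∃ l : List Ω, IsPrimitiveCycle Γ l ∧ ∀ x ∈ l, x ∈ G')
    (g g' : Ω) (hg : g ∈ G') (hg' : g' ∈ G') :
    ∃! l : List Ω, IsPrimitivePath Γ l ∧ (∀ x ∈ l, x ∈ G') ∧
      l.head? = some g ∧ l.getLast? = some g' := by
  classical
  have hreach := hconn g hg g' hg'
  obtain ⟨l₀, hpp₀, hmem₀, hhd₀, hlast₀⟩ := exists_primitive_path hk hreach
  refine ⟨l₀, ⟨hpp₀, hmem₀, hhd₀, hlast₀⟩, ?_⟩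
  rintro l ⟨hpp, hmem, hhd, hlast⟩
  by_cases hgg : g = g'
  · subst hgg
    have key : ∀ (m : List Ω), IsPrimitivePath Γ m → (∀ x ∈ m, x ∈ G') →
        m.head? = some g → m.getLast? = some g → m = [g] := by
      intro m hm hmmem hmh hml
      have hne : m ≠ [] := hm.1.1.1
      rcases Nat.lt_or_ge m.length 2 with h2 | h2
      · have h1 : m.length = 1 := by
          have := List.length_pos_iff.2 hne
          omega
        obtain ⟨x, rfl⟩ := List.length_eq_one_iff.1 h1
        rw [List.head?_cons] at hmh
        rw [Option.some.inj hmh]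
      · exfalso
        exact hnoprim ⟨m,
          prim_cycle_of_closed_path (fun x hx => hk x (hmmem x hx)) hm hmh hml h2, hmmem⟩
    rw [key l hpp hmem hhd hlast, key l₀ hpp₀ hmem₀ hhd₀ hlast₀]
  · obtain ⟨p, hp, hpext⟩ := path_of_prim hpp hmem hk hhd hlast hgg
    obtain ⟨p₀, hp₀, hp₀ext⟩ := path_of_prim hpp₀ hmem₀ hk hhd₀ hlast₀ hgg
    have hac := bg_acyclic ha1 hk hnoprim
    have huniq := SimpleGraph.isAcyclic_iff_path_unique.mp hac ⟨p, hp⟩ ⟨p₀, hp₀⟩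
    have hpeq : p = p₀ := congrArg Subtype.val huniq
    rw [← hpext, ← hp₀ext, hpeq]

end Birkhoff
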